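/- Let g and 𝔨 be Lie algebras over a field, ρ : g → Der(𝔨) an action of g on 𝔨 by derivations, λ ≠ 0, and T : 𝔨 → g a relative Rota–Baxter operator of weight λ. Then the bracket on Dual(g) × 𝔨 defined by [(ξ,u),(η,v)]_* := λ⁻¹·(ad*_{Tu}η − ad*_{Tv}ξ, ρ(Tu)v − ρ(Tv)u + λ⁅u,v⁆_𝔨) is a Lie bracket (bilinear, alternating, and satisfying the Jacobi identity). This is the Lie algebra g*⋊𝔨_T occurring in the Lie sub-bialgebra (g ⋉_{ρ*} 𝔨*, g*⋊𝔨_T) of the factorizable Lie bialgebra associated with T. -/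

import Mathlib

variable {K : Type*} [Field K] {g : Type*} [LieRing g] [LieAlgebra K g]
  {k : Type*} [LieRing k] [LieAlgebra K k]

attribute [local instance 100] LieRing.ofAssociativeRing

/-- Coadjoint action `ad*_x ξ = −ξ ∘ (ad x)` on the dual space. -/
noncomputable def coad (x : g) (ξ : Module.Dual K g) : Module.Dual K g :=
  -(ξ ∘ₗ (LieAlgebra.ad K g x : g →ₗ[K] g))

/-- The bracket `[(ξ,u),(η,v)]_* = lam⁻¹ • (ad*_{Tu}η − ad*_{Tv}ξ,
ρ(Tu)v − ρ(Tv)u + lam⁅u,v⁆)` on `Dual g × k`. -/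
noncomputable def starBracket (ρ : g →ₗ⁅K⁆ Module.End K k) (T : k →ₗ[K] g) (lam : K)
    (a b : Module.Dual K g × k) : Module.Dual K g × k :=
  lam⁻¹ • (coad (T a.2) b.1 - coad (T b.2) a.1,
    ρ (T a.2) b.2 - ρ (T b.2) a.2 + lam • ⁅a.2, b.2⁆)

lemma coad_apply' (x : g) (ξ : Module.Dual K g) (y : g) : coad x ξ y = -ξ ⁅x, y⁆ := rfl

lemma coad_add_left' (x y : g) (ξ : Module.Dual K g) :
    coad (x + y) ξ = coad x ξ + coad y ξ := by
  ext z; simp [coad_apply']; abel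

lemma coad_smul_left' (t : K) (x : g) (ξ : Module.Dual K g) :
    coad (t • x) ξ = t • coad x ξ := by
  ext z; simp [coad_apply']

lemma coad_add_right' (x : g) (ξ η : Module.Dual K g) :
    coad x (ξ + η) = coad x ξ + coad x η := by
  ext z; simp [coad_apply']; abel

lemma coad_smul_right' (t : K) (x : g) (ξ : Module.Dual K g) :
    coad x (t • ξ) = t • coad x ξ := by
  ext z; simp [coad_apply']

/-- For Lie algebras `g`, `k`, an action `ρ : g → Der(k)` by derivations,
`lam ≠ 0` and a relative Rota–Baxter operator `T : k → g` of weight `lam`, the bracket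
`[·,·]_*` on `Dual g × k` is a Lie bracket: bilinear, alternating, and satisfying the
(Leibniz form of the) Jacobi identity.  This is the Lie algebra `g* ⋊ k_T` of the
Lie sub-bialgebra `(g ⋉_{ρ*} k*, g* ⋊ k_T)`. -/
theorem stmt16 (ρ : g →ₗ⁅K⁆ Module.End K k)
    (hder : ∀ (x : g) (u v : k), ρ x ⁅u, v⁆ = ⁅ρ x u, v⁆ + ⁅u, ρ x v⁆)
    (lam : K) (hlam : lam ≠ 0) (T : k →ₗ[K] g)
    (hT : ∀ u v : k, ⁅T u, T v⁆ = T (ρ (T u) v - ρ (T v) u + lam • ⁅u, v⁆)) :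
    -- bilinearity
    (∀ a b c : Module.Dual K g × k,
      starBracket ρ T lam (a + b) c = starBracket ρ T lam a c + starBracket ρ T lam b c) ∧
    (∀ (t : K) (a b : Module.Dual K g × k),
      starBracket ρ T lam (t • a) b = t • starBracket ρ T lam a b) ∧
    (∀ a b c : Module.Dual K g × k,
      starBracket ρ T lam a (b + c) = starBracket ρ T lam a b + starBracket ρ T lam a c) ∧
    (∀ (t : K) (a b : Module.Dual K g × k),
      starBracket ρ T lam a (t • b) = t • starBracket ρ T lam a b) ∧
    -- alternating
    (∀ a : Module.Dual K g × k, starBracket ρ T lam a a = 0) ∧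
    -- Jacobi identity (Leibniz form)
    (∀ a b c : Module.Dual K g × k,
      starBracket ρ T lam a (starBracket ρ T lam b c) =
        starBracket ρ T lam (starBracket ρ T lam a b) c +
          starBracket ρ T lam b (starBracket ρ T lam a c)) := by
  refine ⟨?_, ?_, ?_, ?_, ?_, ?_⟩
  · intro a b c
    simp only [starBracket, Prod.fst_add, Prod.snd_add, map_add, coad_add_left', coad_add_right',
      Prod.smul_mk, Prod.mk_add_mk, Prod.mk.injEq, add_lie, map_add, LinearMap.add_apply]
    constructor
    · module
    · module
  · intro t a b
    simp only [starBracket, Prod.smul_fst, Prod.smul_snd, map_smul, coad_smul_left',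
      coad_smul_right', Prod.smul_mk, Prod.mk.injEq, smul_lie, map_smul,
      LinearMap.smul_apply]
    constructor
    · module
    · module
  · intro a b c
    simp only [starBracket, Prod.fst_add, Prod.snd_add, map_add, coad_add_left', coad_add_right',
      Prod.smul_mk, Prod.mk_add_mk, Prod.mk.injEq, lie_add, map_add, LinearMap.add_apply]
    constructor
    · module
    · module
  · intro t a b
    simp only [starBracket, Prod.smul_fst, Prod.smul_snd, map_smul, coad_smul_left',
      coad_smul_right', Prod.smul_mk, Prod.mk.injEq, lie_smul, map_smul,
      LinearMap.smul_apply]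
    constructor
    · module
    · module
  · intro a
    simp only [starBracket, lie_self, smul_zero, sub_self, Prod.smul_mk, add_zero,
      Prod.mk_eq_zero]
    constructor <;> simp
  · intro a b c
    have hTW : ∀ p q : Module.Dual K g × k,
        T ((starBracket ρ T lam p q).2) = lam⁻¹ • ⁅T p.2, T q.2⁆ := by
      intro p q
      simp only [starBracket, Prod.smul_snd, map_smul, ← hT]
    obtain ⟨ξ, u⟩ := a; obtain ⟨η, v⟩ := b; obtain ⟨ζ, w⟩ := c
    refine Prod.ext ?_ ?_
    · -- first component
      have e1 : ∀ p q, (starBracket ρ T lam p q).1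
          = lam⁻¹ • (coad (T p.2) q.1 - coad (T q.2) p.1) := fun p q => rfl
      ext x
      simp only [Prod.fst_add, e1, hTW, LinearMap.add_apply, LinearMap.smul_apply,
        LinearMap.sub_apply, coad_apply', map_sub, map_smul, map_neg, smul_lie,
        starBracket, Prod.smul_fst, Prod.smul_snd, ← hT]
      have h1 : ζ ⁅T u, ⁅T v, x⁆⁆ = ζ ⁅⁅T u, T v⁆, x⁆ + ζ ⁅T v, ⁅T u, x⁆⁆ := by
        rw [← map_add, ← leibniz_lie]
      have h2 : η ⁅T u, ⁅T w, x⁆⁆ = η ⁅⁅T u, T w⁆, x⁆ + η ⁅T w, ⁅T u, x⁆⁆ := by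
        rw [← map_add, ← leibniz_lie]
      have h3 : ξ ⁅T v, ⁅T w, x⁆⁆ = ξ ⁅⁅T v, T w⁆, x⁆ + ξ ⁅T w, ⁅T v, x⁆⁆ := by
        rw [← map_add, ← leibniz_lie]
      simp only [smul_eq_mul]
      linear_combination (lam⁻¹ * lam⁻¹) * (h2 - h1 - h3)
    · -- second component
      have e2 : ∀ p q, (starBracket ρ T lam p q).2
          = lam⁻¹ • (ρ (T p.2) q.2 - ρ (T q.2) p.2 + lam • ⁅p.2, q.2⁆) := fun p q => rfl
      have hρ : ∀ v w : k, ρ (T (lam⁻¹ • (ρ (T v) w - ρ (T w) v + lam • ⁅v, w⁆)))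
          = lam⁻¹ • (ρ (T v) * ρ (T w) - ρ (T w) * ρ (T v)) := by
        intro v w
        rw [map_smul, ← hT, map_smul, LieHom.map_lie, Ring.lie_def]
      simp only [Prod.snd_add, e2, hρ]
      simp only [LinearMap.smul_apply, LinearMap.sub_apply, Module.End.mul_apply,
        map_sub, map_add, map_smul, hder, smul_lie, lie_smul, smul_sub, smul_add, smul_smul,
        inv_mul_cancel₀ hlam, one_smul, lie_add, add_lie, lie_sub, sub_lie]
      have hJ : ⁅u, ⁅v, w⁆⁆ = ⁅⁅u, v⁆, w⁆ + ⁅v, ⁅u, w⁆⁆ := leibniz_lie u v w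
      have hsk : ⁅ρ (T w) u, v⁆ = -⁅v, ρ (T w) u⁆ := by rw [← lie_skew]
      linear_combination (norm := match_scalars <;> field_simp <;> ring) hJ + lam⁻¹ • hsk
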